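/- Let M be a popular matching of a CHA instance I with switching graph G_M. If a vertex h of G_M has at least one incoming edge of weight +1, then all outgoing edges of h have weight −1, and h has no incoming edge of weight −1. -/

import Mathlib

/-!
Let `a` be the agent of an incoming `+1` edge, so `M(a) = s(a)` and `f(a) = h`. Popularity
forces `h` to be full (otherwise `a` moves to `h`), and forces every occupant `c` of `h` to have
`f(c) = h`: otherwise `a` moves to `h` and `c` to `t = f(c)`, and if `t` is full and not vacated
by `a`, one occupant of `t` is demoted to its last resort; two agents gain and at most one loses.
Hence `|f(h)| ≥ c(h)`, so `h` is nobody's `s`-house, which excludes both an outgoing `+1` edge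
and an incoming `-1` edge at `h`.
-/

/-- A Capacitated House Allocation (CHA) instance: agents `A`, houses `H`, a capacity
function `cap : H → ℤ_{>0}`, and for each agent a strict preference order (lower rank
means more preferred) over its adjacent houses, augmented with a unique last-resort
house `l(a)` of capacity `1` and lowest preference, appearing only on `a`'s list. -/
structure CHAInstance (A H : Type*) where
  adj : A → H → Prop
  rank : A → H → ℕ
  rank_strict : ∀ a h h', adj a h → adj a h' → rank a h = rank a h' → h = h'
  cap : H → ℕ
  cap_pos : ∀ h, 0 < cap h
  lastResort : A → H
  lastResort_injective : Function.Injective lastResort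
  lastResort_adj : ∀ a, adj a (lastResort a)
  lastResort_worst : ∀ a h, adj a h → h ≠ lastResort a → rank a h < rank a (lastResort a)
  lastResort_only : ∀ a a', adj a' (lastResort a) → a' = a
  lastResort_cap : ∀ a, cap (lastResort a) = 1

namespace CHAInstance

variable {A H : Type*}

/-- A matching of the CHA instance `I`: each agent is matched to at most one adjacent
house, and each house `h` is matched to at most `cap h` agents. -/
def IsMatching (I : CHAInstance A H) (M : Set (A × H)) : Prop :=
  (∀ p ∈ M, I.adj p.1 p.2) ∧ (∀ p ∈ M, ∀ q ∈ M, p.1 = q.1 → p = q) ∧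
    (∀ h : H, {a | (a, h) ∈ M}.ncard ≤ I.cap h)

/-- Agent `a` prefers matching `M` to matching `M'`: `a` is matched in `M` and either
unmatched in `M'`, or strictly prefers its house in `M` to its house in `M'`. -/
def Prefers (I : CHAInstance A H) (M M' : Set (A × H)) (a : A) : Prop :=
  ∃ h, (a, h) ∈ M ∧ ∀ h', (a, h') ∈ M' → I.rank a h < I.rank a h'

/-- `M` is more popular than `M'`. -/
def MorePopular [Fintype A] (I : CHAInstance A H) (M M' : Set (A × H)) : Prop :=
  Nat.card {a | Prefers I M M' a} > Nat.card {a | Prefers I M' M a}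

/-- `M` is a popular matching of `I`. -/
def IsPopular [Fintype A] (I : CHAInstance A H) (M : Set (A × H)) : Prop :=
  I.IsMatching M ∧ ∀ M', I.IsMatching M' → ¬ MorePopular I M' M

/-- `h = f(a)`: house `h` is the (unique) first choice of agent `a`. -/
def IsFirstChoice (I : CHAInstance A H) (a : A) (h : H) : Prop :=
  I.adj a h ∧ ∀ h', I.adj a h' → I.rank a h ≤ I.rank a h'

/-- `f(h)`: the set of agents whose first choice is `h`. -/
def fSet (I : CHAInstance A H) (h : H) : Set A := {a | IsFirstChoice I a h}

/-- `h` is an `f`-house if it is the first choice of some agent. -/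
def IsFHouse (I : CHAInstance A H) (h : H) : Prop := ∃ a, IsFirstChoice I a h

/-- The defining condition for `s(a)`: `h` is not an `f`-house, or `h` is an `f`-house
with `h ≠ f(a)` and `|f(h)| < c(h)`. -/
def SCond (I : CHAInstance A H) (a : A) (h : H) : Prop :=
  ¬ IsFHouse I h ∨ (¬ IsFirstChoice I a h ∧ (fSet I h).ncard < I.cap h)

/-- `h = s(a)`: house `h` is the highest-ranked house on `a`'s preference list
satisfying `SCond`. -/
def IsSecondChoice (I : CHAInstance A H) (a : A) (h : H) : Prop :=
  I.adj a h ∧ SCond I a h ∧ ∀ h', I.adj a h' → SCond I a h' → I.rank a h ≤ I.rank a h'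

/-- The switching graph `G_M` of `I` with respect to a popular matching `M`:
`SwEdge I M a src tgt w` says that agent `a` contributes the directed edge from
`src = M(a)` to `tgt`, the other element of `{f(a), s(a)}`, with weight
`w = -1` if `M(a) = f(a)` and `w = +1` otherwise. -/
def SwEdge (I : CHAInstance A H) (M : Set (A × H)) (a : A) (src tgt : H) (w : ℤ) :
    Prop :=
  (a, src) ∈ M ∧
    ((IsFirstChoice I a src ∧ IsSecondChoice I a tgt ∧ w = -1) ∨
     (IsSecondChoice I a src ∧ IsFirstChoice I a tgt ∧ w = 1))

/-- The unsaturation degree `u_M(h) = c(h) - |M(h)|` of a house `h`. -/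
noncomputable def unsatDeg (I : CHAInstance A H) (M : Set (A × H)) (h : H) : ℕ :=
  I.cap h - {a | (a, h) ∈ M}.ncard

/-- A house is saturated if its unsaturation degree is `0`. -/
def Saturated (I : CHAInstance A H) (M : Set (A × H)) (h : H) : Prop :=
  unsatDeg I M h = 0

end CHAInstance

namespace CHAInstance

variable {A H : Type*} {I : CHAInstance A H}

lemma IsMatching.eq_of_mem {M : Set (A × H)} (hM : I.IsMatching M) {x : A} {u v : H}
    (hu : (x, u) ∈ M) (hv : (x, v) ∈ M) : u = v :=
  congrArg Prod.snd (hM.2.1 _ hu _ hv rfl)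

lemma exists_isFirstChoice (I : CHAInstance A H) (x : A) : ∃ h, I.IsFirstChoice x h :=
  ⟨Function.argminOn (I.rank x) {h | I.adj x h} ⟨_, I.lastResort_adj x⟩,
    Function.argminOn_mem _ _ _, fun _ hh' => Function.argminOn_le _ {h | I.adj x h} hh'⟩

lemma IsFirstChoice.rank_lt {x : A} {h u : H} (hf : I.IsFirstChoice x h) (hu : I.adj x u)
    (hne : u ≠ h) : I.rank x h < I.rank x u :=
  (hf.2 u hu).lt_of_ne fun heq => hne (I.rank_strict x u h hu hf.1 heq.symm)

lemma IsFirstChoice.ne_lastResort {x y : A} {h : H} (hf : I.IsFirstChoice x h) (hxy : x ≠ y) :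
    h ≠ I.lastResort y :=
  fun e => hxy (I.lastResort_only y x (e ▸ hf.1))

def reassign (M : Set (A × H)) (S : Set A) (g : A → H) : Set (A × H) :=
  {p | (p.1 ∈ S → p.2 = g p.1) ∧ (p.1 ∉ S → p ∈ M)}

variable {M : Set (A × H)} {S : Set A} {g : A → H}

lemma mk_mem_reassign_of_mem {x : A} (hx : x ∈ S) : (x, g x) ∈ reassign M S g := by
  simp [reassign, hx]

lemma mem_reassign_iff_of_notMem {x : A} {u : H} (hx : x ∉ S) :
    (x, u) ∈ reassign M S g ↔ (x, u) ∈ M := by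
  simp [reassign, hx]

lemma eq_of_mem_reassign {x : A} {u : H} (hx : x ∈ S) (hu : (x, u) ∈ reassign M S g) :
    u = g x := by
  simpa [reassign, hx] using hu

lemma isMatching_reassign [Finite A] (hM : I.IsMatching M) (hadj : ∀ x ∈ S, I.adj x (g x))
    (hinj : S.InjOn g)
    (hroom : ∀ x ∈ S, (∃ y ∈ S, (y, g x) ∈ M) ∨ {y | (y, g x) ∈ M}.ncard < I.cap (g x)) :
    I.IsMatching (reassign M S g) := by
  refine ⟨?_, ?_, fun u => ?_⟩
  · rintro ⟨x, u⟩ hp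
    by_cases hx : x ∈ S
    · exact eq_of_mem_reassign hx hp ▸ hadj x hx
    · exact hM.1 _ ((mem_reassign_iff_of_notMem hx).1 hp)
  · rintro ⟨x, u⟩ hp ⟨_, v⟩ hq rfl
    by_cases hx : x ∈ S
    · rw [eq_of_mem_reassign hx hp, eq_of_mem_reassign hx hq]
    · rw [hM.eq_of_mem ((mem_reassign_iff_of_notMem hx).1 hp)
        ((mem_reassign_iff_of_notMem hx).1 hq)]
  by_cases hu : ∃ x ∈ S, g x = u
  · obtain ⟨x, hxS, rfl⟩ := hu
    have hsub : {y | (y, g x) ∈ reassign M S g} ⊆ insert x ({y | (y, g x) ∈ M} \ S) := by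
      intro y hy
      by_cases hyS : y ∈ S
      · exact Or.inl (hinj hyS hxS (eq_of_mem_reassign hyS hy).symm)
      · exact Or.inr ⟨(mem_reassign_iff_of_notMem hyS).1 hy, hyS⟩
    have hstay : ({y | (y, g x) ∈ M} \ S).ncard < I.cap (g x) := by
      rcases hroom x hxS with ⟨y, hyS, hy⟩ | hlt
      · refine (Set.ncard_lt_ncard ?_).trans_le (hM.2.2 _)
        exact Set.ssubset_iff_of_subset Set.sdiff_subset |>.2 ⟨y, hy, fun h => h.2 hyS⟩
      · exact (Set.ncard_le_ncard Set.sdiff_subset).trans_lt hlt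
    calc {y | (y, g x) ∈ reassign M S g}.ncard
        ≤ (insert x ({y | (y, g x) ∈ M} \ S)).ncard := Set.ncard_le_ncard hsub
      _ ≤ ({y | (y, g x) ∈ M} \ S).ncard + 1 := Set.ncard_insert_le _ _
      _ ≤ I.cap (g x) := hstay
  · refine le_trans (Set.ncard_le_ncard fun y hy => ?_) (hM.2.2 u)
    by_cases hyS : y ∈ S
    · exact absurd ⟨y, hyS, (eq_of_mem_reassign hyS hy).symm⟩ hu
    · exact (mem_reassign_iff_of_notMem hyS).1 hy

lemma morePopular_reassign [Fintype A] {G W : Set A}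
    (hbetter : ∀ x ∈ G, ∀ u, (x, u) ∈ M → I.rank x (g x) < I.rank x u)
    (hcard : W.ncard < G.ncard) : I.MorePopular (reassign M (G ∪ W) g) M := by
  have hworse : {x | I.Prefers M (reassign M (G ∪ W) g) x} ⊆ W := by
    rintro x ⟨u, hu, hpref⟩
    by_contra hxW
    by_cases hxG : x ∈ G
    · exact (hpref _ (mk_mem_reassign_of_mem (Or.inl hxG))).not_gt (hbetter x hxG u hu)
    · have hxS : x ∉ G ∪ W := by simp [hxG, hxW]
      exact (hpref u ((mem_reassign_iff_of_notMem hxS).2 hu)).false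
  have hgain : G ⊆ {x | I.Prefers (reassign M (G ∪ W) g) M x} :=
    fun x hx => ⟨g x, mk_mem_reassign_of_mem (Or.inl hx), hbetter x hx⟩
  unfold MorePopular
  rw [Nat.card_coe_set_eq, Nat.card_coe_set_eq]
  exact ((Set.ncard_le_ncard hworse).trans_lt hcard).trans_le (Set.ncard_le_ncard hgain)

lemma not_isSecondChoice_of_cap_le_ncard_fSet {b : A} {h : H} (hf : I.IsFHouse h)
    (hcap : I.cap h ≤ (I.fSet h).ncard) : ¬ I.IsSecondChoice b h :=
  fun hs => hs.2.1.elim (· hf) fun hb => hb.2.not_ge hcap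

variable [Fintype A]

lemma IsPopular.not_isMatching_reassign (hM : I.IsPopular M) {G W : Set A}
    (hbetter : ∀ x ∈ G, ∀ u, (x, u) ∈ M → I.rank x (g x) < I.rank x u)
    (hcard : W.ncard < G.ncard) : ¬ I.IsMatching (reassign M (G ∪ W) g) :=
  fun hM' => hM.2 _ hM' (morePopular_reassign hbetter hcard)

section

variable (hM : I.IsPopular M) {a : A} {src h : H} (haM : (a, src) ∈ M)
  (haf : I.IsFirstChoice a h) (hne : src ≠ h)
include hM haM haf hne

lemma IsPopular.cap_le_ncard_of_isFirstChoice : I.cap h ≤ {x | (x, h) ∈ M}.ncard := by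
  by_contra! hroom
  refine hM.not_isMatching_reassign (G := {a}) (W := ∅) (g := fun _ => h) ?_ (by simp) ?_
  · rintro x rfl u hu
    exact hM.1.eq_of_mem hu haM ▸ haf.rank_lt (hM.1.1 _ haM) hne
  · exact isMatching_reassign hM.1 (by simp [haf.1]) (by simp) (fun _ _ => Or.inr hroom)

section

variable [DecidableEq A] {c : A} {t : H} (hcM : (c, h) ∈ M) (hct : I.IsFirstChoice c t)
  (hth : t ≠ h) (hca : c ≠ a)
include hcM hct hth hca

-- The last branch sends the occupant of `t` demoted in `exchange_target_vacant` to its last resort.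
lemma IsPopular.rank_exchange_lt : ∀ x ∈ ({a, c} : Set A), ∀ u, (x, u) ∈ M →
    I.rank x (if x = a then h else if x = c then t else I.lastResort x) < I.rank x u := by
  rintro x (rfl | rfl) u hu
  · simpa [hM.1.eq_of_mem hu haM] using haf.rank_lt (hM.1.1 _ haM) hne
  · simpa [hca, hM.1.eq_of_mem hu hcM] using hct.rank_lt (hM.1.1 _ hcM) hth.symm

lemma IsPopular.exchange_target_full : t ≠ src ∧ I.cap t ≤ {y | (y, t) ∈ M}.ncard := by
  by_contra hroom
  rw [not_and_or, not_ne_iff, not_le] at hroom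
  refine hM.not_isMatching_reassign (W := ∅) (hM.rank_exchange_lt haM haf hne hcM hct hth hca)
    (by simp [Set.ncard_pair hca.symm]) (isMatching_reassign hM.1 ?_ ?_ ?_)
  · rintro x ((rfl | rfl) | hx)
    · simpa using haf.1
    · simpa [hca] using hct.1
    · exact absurd hx (Set.notMem_empty x)
  · rintro x ((rfl | rfl) | hx) y ((rfl | rfl) | hy) hxy <;>
      simp_all [eq_comm]
  · rintro x ((rfl | rfl) | hx)
    · exact Or.inl ⟨c, by simp, by simpa using hcM⟩
    · rcases hroom with rfl | hlt
      · exact Or.inl ⟨a, by simp, by simpa [hca] using haM⟩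
      · exact Or.inr (by simpa [hca] using hlt)
    · exact absurd hx (Set.notMem_empty x)

lemma IsPopular.exchange_target_vacant (hts : t ≠ src) : {y | (y, t) ∈ M} = ∅ := by
  refine Set.eq_empty_of_forall_notMem fun d hdM => ?_
  have hda : d ≠ a := fun e => hts (hM.1.eq_of_mem (e ▸ hdM) haM)
  have hdc : d ≠ c := fun e => hth (hM.1.eq_of_mem (e ▸ hdM) hcM)
  have hhd := haf.ne_lastResort hda.symm
  have htd := hct.ne_lastResort hdc.symm
  have hfree : {y | (y, I.lastResort d) ∈ M}.ncard < I.cap (I.lastResort d) := by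
    have hempty : {y | (y, I.lastResort d) ∈ M} = ∅ :=
      Set.eq_empty_of_forall_notMem fun y hy => htd <| hM.1.eq_of_mem hdM <|
        I.lastResort_only d y (hM.1.1 _ hy) ▸ hy
    simpa [hempty] using I.cap_pos _
  refine hM.not_isMatching_reassign (W := {d}) (hM.rank_exchange_lt haM haf hne hcM hct hth hca)
    (by simp [Set.ncard_pair hca.symm]) (isMatching_reassign hM.1 ?_ ?_ ?_)
  · rintro x ((rfl | rfl) | rfl)
    · simpa using haf.1
    · simpa [hca] using hct.1
    · simpa [hda, hdc] using I.lastResort_adj _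
  · rintro x ((rfl | rfl) | rfl) y ((rfl | rfl) | rfl) hxy <;>
      simp_all [eq_comm]
  · rintro x ((rfl | rfl) | rfl)
    · exact Or.inl ⟨c, by simp, by simpa using hcM⟩
    · exact Or.inl ⟨d, by simp, by simpa [hca] using hdM⟩
    · exact Or.inr (by simpa [hda, hdc] using hfree)

end

lemma IsPopular.isFirstChoice_of_mem {c : A} (hcM : (c, h) ∈ M) : I.IsFirstChoice c h := by
  classical
  by_contra hcf
  obtain ⟨t, hct⟩ := I.exists_isFirstChoice c
  have hth : t ≠ h := fun e => hcf (e ▸ hct)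
  have hca : c ≠ a := fun e => hne (hM.1.eq_of_mem haM (e ▸ hcM))
  obtain ⟨hts, hfull⟩ := hM.exchange_target_full haM haf hne hcM hct hth hca
  have hvacant := hM.exchange_target_vacant haM haf hne hcM hct hth hca hts
  have := I.cap_pos t
  simp only [hvacant, Set.ncard_empty] at hfull
  omega

lemma IsPopular.cap_le_ncard_fSet : I.cap h ≤ (I.fSet h).ncard :=
  (hM.cap_le_ncard_of_isFirstChoice haM haf hne).trans <|
    Set.ncard_le_ncard fun _ hc => hM.isFirstChoice_of_mem haM haf hne hc

end

end CHAInstance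

open CHAInstance in
theorem switchingGraph_incoming_plusOne_structure_general
    {A H : Type*} [Fintype A] (I : CHAInstance A H)
    (M : Set (A × H)) (hM : IsPopular I M) (h : H)
    (hin : ∃ (a : A) (src : H), SwEdge I M a src h 1) :
    (∀ (a : A) (tgt : H) (w : ℤ), SwEdge I M a h tgt w → w = -1) ∧
      (∀ (a : A) (src : H), ¬ SwEdge I M a src h (-1)) := by
  obtain ⟨a, src, haM, ⟨-, -, hw⟩ | ⟨has, haf, -⟩⟩ := hin
  · exact absurd hw (by norm_num)
  have hf : IsFHouse I h := ⟨a, haf⟩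
  have hne : src ≠ h := by
    rintro rfl
    exact has.2.1.elim (· hf) (·.1 haf)
  have hnot_s (b : A) : ¬ IsSecondChoice I b h :=
    not_isSecondChoice_of_cap_le_ncard_fSet hf (hM.cap_le_ncard_fSet haM haf hne)
  refine ⟨fun b tgt w ⟨_, hb⟩ => ?_, fun b src' ⟨_, hb⟩ => ?_⟩
  · rcases hb with ⟨-, -, hw⟩ | ⟨hs, -, -⟩
    · exact hw
    · exact absurd hs (hnot_s b)
  · rcases hb with ⟨-, hs, -⟩ | ⟨-, -, hw⟩
    · exact hnot_s b hs
    · exact absurd hw (by norm_num)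

open CHAInstance in
/-- Property 5: in the switching graph of a CHA instance with respect to
a popular matching `M`, if a vertex `h` has at least one incoming edge of weight `+1`,
then all its outgoing edges have weight `-1` and it has no incoming edge of weight
`-1`. -/
theorem switchingGraph_incoming_plusOne_structure
    {A H : Type*} [Fintype A] [Fintype H] (I : CHAInstance A H)
    (M : Set (A × H)) (hM : IsPopular I M) (h : H)
    (hin : ∃ (a : A) (src : H), SwEdge I M a src h 1) :
    (∀ (a : A) (tgt : H) (w : ℤ), SwEdge I M a h tgt w → w = -1) ∧
      (∀ (a : A) (src : H), ¬ SwEdge I M a src h (-1)) :=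
  switchingGraph_incoming_plusOne_structure_general I M hM h hin
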